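/- Define σ : ℂ⁵ → ℂ⁵ by σ(x) = ((1/64)f0 − (1/4)f1 + (3/2)f2 + 16f3 + 64f4, −(1/8)f0 + (3/2)f1 + 2f2 + 32f3, f0 − 8f1 + 16f2, −8f0 + 32f1, 64f0), and p : ℂ⁴ → ℂ⁵ by p(x1,x2,x3,x4) = (4x1x3 + x1x4 − 3x2² − x2x3, x1x4, x2x4, x3x4, x4²) (the homogenized parametrization of the quadric). Then the image of p lies on Q = {f1 + f5 = 0}, and σ(σ(p(x))) is a polynomial scalar multiple of p(x) for all x ∈ ℂ⁴. Hence σ induces a birational involution of the smooth quadric Q = {f1 + f5 = 0} ⊂ P⁴. -/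

import Mathlib

/-! On `Q`, `σ ∘ σ` is multiplication by the cubic `-2¹⁶ · det H(y)`, where `H(y)` is the
`3 × 3` Hankel matrix of `y`: each component of `σ(σ(y)) + 2¹⁶ det H(y) · y` is an explicit
quadratic multiple of `f1 + f5`. Since `p` lands on `Q`, this gives the scalar for `p(x)`. -/

/-- σ : ℂ⁵ → ℂ⁵ from Case (3) of Theorem 3.1. -/
noncomputable def sigmaMap (x : Fin 5 → ℂ) : Fin 5 → ℂ :=
  let f0 := (x 3)^2 - (x 2)*(x 4)
  let f1 := (x 2)*(x 3) - (x 1)*(x 4)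
  let f2 := (x 2)^2 - (x 0)*(x 4)
  let f3 := (x 1)*(x 2) - (x 0)*(x 3)
  let f4 := (x 1)^2 - (x 0)*(x 2)
  ![ (1/64)*f0 - (1/4)*f1 + (3/2)*f2 + 16*f3 + 64*f4,
     -(1/8)*f0 + (3/2)*f1 + 2*f2 + 32*f3,
     f0 - 8*f1 + 16*f2,
     -8*f0 + 32*f1,
     64*f0 ]

/-- The homogenized parametrization of the quadric Q = {f1 + f5 = 0}. -/
def pMap3 (x1 x2 x3 x4 : ℂ) : Fin 5 → ℂ :=
  ![ 4*x1*x3 + x1*x4 - 3*x2^2 - x2*x3, x1*x4, x2*x4, x3*x4, x4^2 ]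

/-- The quadratic form `f1 + f5` cutting out `Q`. -/
def quadricForm {R : Type*} [CommRing R] (y : Fin 5 → R) : R :=
  y 2 * y 3 - y 1 * y 4 + 3 * y 2 ^ 2 - 4 * y 1 * y 3 + y 0 * y 4

/-- `f0, …, f4` are the `2 × 2` minors of this Hankel matrix. -/
def hankelDet {R : Type*} [CommRing R] (y : Fin 5 → R) : R :=
  !![y 0, y 1, y 2; y 1, y 2, y 3; y 2, y 3, y 4].det

theorem quadricForm_pMap3 (x1 x2 x3 x4 : ℂ) : quadricForm (pMap3 x1 x2 x3 x4) = 0 := by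
  simp only [quadricForm, pMap3, Matrix.cons_val]
  ring

theorem sigmaMap_sigmaMap_of_quadricForm_eq_zero {y : Fin 5 → ℂ} (hy : quadricForm y = 0) :
    sigmaMap (sigmaMap y) = (-2 ^ 16 * hankelDet y) • y := by
  simp only [quadricForm] at hy
  ext i
  fin_cases i <;>
    simp only [sigmaMap, hankelDet, Matrix.det_fin_three, Matrix.of_apply, Matrix.cons_val',
      Matrix.cons_val, Matrix.cons_val_zero, Matrix.cons_val_one, Matrix.cons_val_fin_one,
      Fin.zero_eta, Fin.mk_one, Fin.reduceFinMk, Fin.isValue, Pi.smul_apply, smul_eq_mul]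
  · linear_combination 128 * (-3 * y 0 * y 4 + 4 * y 1 * y 3 - y 1 * y 4 - y 2 ^ 2 + y 2 * y 3) * hy
  · linear_combination 512 * (32 * y 0 * y 3 + 3 * y 0 * y 4 - 32 * y 1 * y 2 - 4 * y 1 * y 3
      + y 1 * y 4 + y 2 ^ 2 - y 2 * y 3) * hy
  · linear_combination 4096 * (y 0 * y 4 + 4 * y 1 * y 3 - y 1 * y 4 - 5 * y 2 ^ 2 + y 2 * y 3) * hy
  · linear_combination 16384 * (y 1 * y 4 - y 2 * y 3) * hy
  · ring

theorem sigma_involution (x1 x2 x3 x4 : ℂ) :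
    ((pMap3 x1 x2 x3 x4 2)*(pMap3 x1 x2 x3 x4 3) - (pMap3 x1 x2 x3 x4 1)*(pMap3 x1 x2 x3 x4 4)
      + 3*(pMap3 x1 x2 x3 x4 2)^2 - 4*(pMap3 x1 x2 x3 x4 1)*(pMap3 x1 x2 x3 x4 3)
      + (pMap3 x1 x2 x3 x4 0)*(pMap3 x1 x2 x3 x4 4) = 0) ∧
    (∃ c : ℂ, sigmaMap (sigmaMap (pMap3 x1 x2 x3 x4)) = c • pMap3 x1 x2 x3 x4) :=
  ⟨quadricForm_pMap3 x1 x2 x3 x4,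
    _, sigmaMap_sigmaMap_of_quadricForm_eq_zero (quadricForm_pMap3 x1 x2 x3 x4)⟩
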